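/- arXiv:2206.05764 — 9 statements merged into one kernel-verified Lean document; each statement's English description precedes it below -/
import Mathlib

section
/- Suppose conditions (a) and (b) hold for the family {f_{(I,J)}}. Then for every (I,J) ∈ 𝓘 with J ≠ ∅ one has f_{(I,J)}(x) = (min_{i∈I} f_i(x) − max_{j∈J} f_j(x))⁺ for all x ∈ X, and for every (I,∅) ∈ 𝓘 one has f_{(I,∅)}(x) = min_{i∈I} f_i(x) for all x ∈ X. Conversely, if for every (I,J) ∈ 𝓘 the function f_{(I,J)} equals (min_{i∈I} f_i − max_{j∈J} f_j)⁺ when J ≠ ∅ and min_{i∈I} f_i when J = ∅, then conditions (a) and (b) both hold. -/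
/-!
Pointwise, condition (a) is equivalent to the splitting rule
`F (I, J) = F (I ∪ {j}, J) + F (I, J ∪ {j})` for `j ∉ I ∪ J`: iterating it down to the atoms
`F (S, Sᶜ)` gives (a). The function `(min_I a - max_J a)⁺` obeys the same rule, and a split-additive
family is determined by its values at `(I, ∅)`, so the forward direction reduces to
`F (I, ∅) = min_{i ∈ I} F ({i}, ∅)`. Adding `k` to `I`, `F (I, ∅) = F (I ∪ {k}, ∅) + F (I, {k})`:
if `F (I, {k}) > 0` then every `F ({i}, {k})` with `i ∈ I` is positive, so by (b) every
`F ({k}, {i})` vanishes and `F (I ∪ {k}, ∅) = F ({k}, ∅)`; otherwise `F (I ∪ {k}, ∅) = F (I, ∅)`.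
-/

open Finset

section Gap

variable {ι : Type*}

/-- `gap a I J` is `(min_{i ∈ I} a i - max_{j ∈ J} a j)⁺`, and `min_{i ∈ I} a i` when `J = ∅`;
the value `0` at `I = ∅` is junk. -/
noncomputable def gap (a : ι → ℝ) (I J : Finset ι) : ℝ :=
  if hI : I.Nonempty then
    if hJ : J.Nonempty then max (I.inf' hI a - J.sup' hJ a) 0 else I.inf' hI a
  else 0

lemma gap_of_nonempty (a : ι → ℝ) {I : Finset ι} (hI : I.Nonempty) (J : Finset ι) :
    gap a I J = if hJ : J.Nonempty then max (I.inf' hI a - J.sup' hJ a) 0 else I.inf' hI a :=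
  dif_pos hI

lemma gap_empty_right (a : ι → ℝ) {I : Finset ι} (hI : I.Nonempty) :
    gap a I ∅ = I.inf' hI a := by
  rw [gap_of_nonempty a hI, dif_neg Finset.not_nonempty_empty]

lemma gap_singleton_singleton (a : ι → ℝ) (i j : ι) : gap a {i} {j} = max (a i - a j) 0 := by
  rw [gap_of_nonempty a (singleton_nonempty i), dif_pos (singleton_nonempty j), inf'_singleton,
    sup'_singleton]

lemma gap_singleton_eq_zero_or (a : ι → ℝ) (i j : ι) : gap a {i} {j} = 0 ∨ gap a {j} {i} = 0 := by
  rw [gap_singleton_singleton, gap_singleton_singleton]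
  rcases le_total (a i) (a j) with h | h
  · exact .inl (max_eq_right (sub_nonpos.2 h))
  · exact .inr (max_eq_right (sub_nonpos.2 h))

lemma gap_eq_add [DecidableEq ι] (a : ι → ℝ) {I : Finset ι} (hI : I.Nonempty) (J : Finset ι)
    (j : ι) :
    gap a I J = gap a (insert j I) J + gap a I (insert j J) := by
  rw [gap_of_nonempty a hI, gap_of_nonempty a (insert_nonempty j I), gap_of_nonempty a hI,
    dif_pos (insert_nonempty j J), inf'_insert (H := hI)]
  rcases J.eq_empty_or_nonempty with rfl | hJ
  · simp only [dif_neg Finset.not_nonempty_empty, insert_empty, sup'_singleton]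
    simp only [max_def, min_def]; split_ifs <;> linarith
  · simp only [dif_pos hJ, sup'_insert (H := hJ)]
    simp only [max_def, min_def]; split_ifs <;> linarith

end Gap

section Sandwich

variable {ι : Type*} [Fintype ι] [DecidableEq ι]

def sandwich (I J : Finset ι) : Finset (Finset ι) :=
  univ.powerset.filter fun S => I ⊆ S ∧ J ⊆ Sᶜ

@[simp] lemma mem_sandwich {I J S : Finset ι} : S ∈ sandwich I J ↔ I ⊆ S ∧ J ⊆ Sᶜ := by
  simp [sandwich]

lemma sandwich_compl (I : Finset ι) : sandwich I Iᶜ = {I} := by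
  ext S
  simp only [mem_sandwich, compl_subset_compl, mem_singleton]
  exact ⟨fun h => h.2.antisymm h.1, fun h => ⟨h.ge, h.le⟩⟩

lemma sandwich_anti {I I' J J' : Finset ι} (hI : I ⊆ I') (hJ : J ⊆ J') :
    sandwich I' J' ⊆ sandwich I J := fun S hS => by
  rw [mem_sandwich] at hS ⊢
  exact ⟨hI.trans hS.1, hJ.trans hS.2⟩

lemma sum_sandwich_eq_add {M : Type*} [AddCommMonoid M] (g : Finset ι → M) (I J : Finset ι)
    (j : ι) :
    ∑ S ∈ sandwich I J, g S =
      ∑ S ∈ sandwich (insert j I) J, g S + ∑ S ∈ sandwich I (insert j J), g S := by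
  rw [← sum_filter_add_sum_filter_not (sandwich I J) (j ∈ ·)]
  congr 2 <;> ext S <;> simp only [mem_filter, mem_sandwich, insert_subset_iff, mem_compl] <;>
    tauto

end Sandwich

section Decomposition

variable {ι : Type*} [DecidableEq ι]

/-- Condition (a), at a single point. -/
def IsSandwichSum [Fintype ι] (F : Finset ι → Finset ι → ℝ) : Prop :=
  ∀ I J, I.Nonempty → Disjoint I J → F I J = ∑ S ∈ sandwich I J, F S Sᶜ

def IsSplitAdditive (F : Finset ι → Finset ι → ℝ) : Prop :=
  ∀ I J, I.Nonempty → Disjoint I J → ∀ j, j ∉ I → j ∉ J →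
    F I J = F (insert j I) J + F I (insert j J)

lemma IsSplitAdditive.eq_of_apply_empty {F G : Finset ι → Finset ι → ℝ}
    (hF : IsSplitAdditive F) (hG : IsSplitAdditive G) (h : ∀ I, I.Nonempty → F I ∅ = G I ∅)
    {I J : Finset ι} (hI : I.Nonempty) (hIJ : Disjoint I J) : F I J = G I J := by
  induction J using Finset.induction_on generalizing I with
  | empty => exact h I hI
  | insert j J hj ih =>
    obtain ⟨hjI, hIJ⟩ := disjoint_insert_right.1 hIJ
    have hF_split := hF I J hI hIJ j hjI hj
    have hG_split := hG I J hI hIJ j hjI hj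
    have h₁ := ih hI hIJ
    have h₂ := ih (insert_nonempty j I) (disjoint_insert_left.2 ⟨hj, hIJ⟩)
    linarith

lemma IsSplitAdditive.congr {F G : Finset ι → Finset ι → ℝ} (hG : IsSplitAdditive G)
    (h : ∀ I J, I.Nonempty → Disjoint I J → F I J = G I J) : IsSplitAdditive F :=
  fun I J hI hIJ j hjI hjJ => by
    rw [h I J hI hIJ, h (insert j I) J (insert_nonempty j I) (disjoint_insert_left.2 ⟨hjJ, hIJ⟩),
      h I (insert j J) hI (disjoint_insert_right.2 ⟨hjI, hIJ⟩)]
    exact hG I J hI hIJ j hjI hjJ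

lemma isSplitAdditive_gap (a : ι → ℝ) : IsSplitAdditive (gap a) :=
  fun _ J hI _ j _ _ => gap_eq_add a hI J j

variable [Fintype ι] {F : Finset ι → Finset ι → ℝ}

lemma IsSandwichSum.isSplitAdditive (hF : IsSandwichSum F) : IsSplitAdditive F :=
  fun I J hI hIJ j hjI hjJ => by
    rw [hF I J hI hIJ, hF (insert j I) J (insert_nonempty j I) (disjoint_insert_left.2 ⟨hjJ, hIJ⟩),
      hF I (insert j J) hI (disjoint_insert_right.2 ⟨hjI, hIJ⟩), sum_sandwich_eq_add]

lemma IsSplitAdditive.isSandwichSum (hF : IsSplitAdditive F) : IsSandwichSum F := by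
  intro I J hI hIJ
  induction h : (I ∪ J)ᶜ.card generalizing I J with
  | zero =>
    have hcompl : IsCompl I J :=
      ⟨hIJ, codisjoint_iff.2 (compl_eq_empty_iff _ |>.1 (card_eq_zero.1 h))⟩
    rw [← hcompl.compl_eq, sandwich_compl, sum_singleton]
  | succ n ih =>
    obtain ⟨j, hj⟩ := card_pos.1 (by rw [h]; exact n.succ_pos)
    have hcard : ((I ∪ J)ᶜ.erase j).card = n := by rw [card_erase_of_mem hj, h]; rfl
    rw [mem_compl, mem_union, not_or] at hj
    rw [hF I J hI hIJ j hj.1 hj.2, sum_sandwich_eq_add _ I J j,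
      ih (insert j I) J (insert_nonempty j I) (disjoint_insert_left.2 ⟨hj.2, hIJ⟩)
        (by rwa [insert_union, compl_insert]),
      ih I (insert j J) hI (disjoint_insert_right.2 ⟨hj.1, hIJ⟩)
        (by rwa [union_insert, compl_insert])]

end Decomposition

namespace IsSandwichSum

variable {ι : Type*} [Fintype ι] [DecidableEq ι] {F : Finset ι → Finset ι → ℝ}
  (hF : IsSandwichSum F) (h0 : ∀ I J, 0 ≤ F I J)
include hF h0

lemma anti {I I' J J' : Finset ι} (hI : I.Nonempty) (hI' : I'.Nonempty) (hIJ : Disjoint I J)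
    (hIJ' : Disjoint I' J') (hII' : I ⊆ I') (hJJ' : J ⊆ J') : F I' J' ≤ F I J := by
  rw [hF I J hI hIJ, hF I' J' hI' hIJ']
  exact sum_le_sum_of_subset_of_nonneg (sandwich_anti hII' hJJ') fun S _ _ => h0 S Sᶜ

lemma apply_insert_empty_eq_singleton {k : ι} {I : Finset ι} (hk : k ∉ I)
    (hI : ∀ i ∈ I, F {k} {i} = 0) : F (insert k I) ∅ = F {k} ∅ := by
  induction I using Finset.induction_on with
  | empty => rfl
  | insert i I hi ih =>
    obtain ⟨hki, hk⟩ := not_or.1 (mem_insert.not.1 hk)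
    have hiK : i ∉ insert k I := by simp [hi, Ne.symm hki]
    have h_split := hF.isSplitAdditive (insert k I) ∅ (insert_nonempty k I)
      (disjoint_empty_right _) i hiK (notMem_empty i)
    have h_zero : F (insert k I) {i} = 0 :=
      le_antisymm ((hF.anti h0 (singleton_nonempty k) (insert_nonempty k I)
        (disjoint_singleton.2 hki) (disjoint_singleton_right.2 hiK)
        (singleton_subset_iff.2 (mem_insert_self k I)) subset_rfl).trans_eq
          (hI i (mem_insert_self i I))) (h0 _ _)
    rw [insert_empty, h_zero, add_zero, insert_comm] at h_split
    rw [← h_split, ih hk fun i' hi' => hI i' (mem_insert_of_mem hi')]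

variable (hb : ∀ i j : ι, i ≠ j → F {i} {j} = 0 ∨ F {j} {i} = 0)
include hb

lemma apply_insert_empty {k : ι} {I : Finset ι} (hk : k ∉ I) (hI : I.Nonempty) :
    F (insert k I) ∅ = min (F {k} ∅) (F I ∅) := by
  have h_split : F I ∅ = F (insert k I) ∅ + F I {k} := by
    simpa using hF.isSplitAdditive I ∅ hI (disjoint_empty_right I) k hk (notMem_empty k)
  have h_le : F (insert k I) ∅ ≤ F {k} ∅ :=
    hF.anti h0 (singleton_nonempty k) (insert_nonempty k I) (disjoint_empty_right _)
      (disjoint_empty_right _) (singleton_subset_iff.2 (mem_insert_self k I)) subset_rfl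
  rcases (h0 I {k}).eq_or_lt with h_zero | h_pos
  · rw [min_eq_right] <;> linarith
  · have h_vanish : ∀ i ∈ I, F {k} {i} = 0 := fun i hi =>
      (hb k i (ne_of_mem_of_not_mem hi hk).symm).resolve_right <| ne_of_gt <|
        h_pos.trans_le <| hF.anti h0 (singleton_nonempty i) hI
          (disjoint_singleton.2 (ne_of_mem_of_not_mem hi hk)) (disjoint_singleton_right.2 hk)
          (singleton_subset_iff.2 hi) subset_rfl
    have h_eq := hF.apply_insert_empty_eq_singleton h0 hk h_vanish
    rw [h_eq, min_eq_left]
    linarith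

lemma apply_empty_eq_inf' {I : Finset ι} (hI : I.Nonempty) :
    F I ∅ = I.inf' hI fun i => F {i} ∅ := by
  induction hI using Nonempty.cons_induction with
  | singleton i => rw [inf'_singleton]
  | cons k I hk hI ih =>
    rw [inf'_cons hI, ← ih, cons_eq_insert, hF.apply_insert_empty h0 hb hk hI]

lemma eq_gap {I J : Finset ι} (hI : I.Nonempty) (hIJ : Disjoint I J) :
    F I J = gap (fun i => F {i} ∅) I J :=
  hF.isSplitAdditive.eq_of_apply_empty (isSplitAdditive_gap _)
    (fun I hI => by rw [gap_empty_right _ hI, hF.apply_empty_eq_inf' h0 hb hI]) hI hIJ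

end IsSandwichSum

theorem s2m_main_theorem_general {X : Type*} {ι : Type*} [Fintype ι] [DecidableEq ι]
    (f : Finset ι → Finset ι → X → ℝ)
    (hf_nonneg : ∀ I J x, 0 ≤ f I J x) :
    ((∀ I J : Finset ι, I.Nonempty → Disjoint I J → ∀ x,
        f I J x = ∑ S ∈ univ.powerset.filter (fun S => I ⊆ S ∧ J ⊆ Sᶜ), f S Sᶜ x) ∧
     (∀ i j : ι, i ≠ j →
        Function.support (f {i} {j}) ∩ Function.support (f {j} {i}) = ∅))
    ↔
    (∀ I J : Finset ι, ∀ hI : I.Nonempty, Disjoint I J → ∀ x,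
        f I J x =
          if hJ : J.Nonempty then
            max (I.inf' hI (fun i => f {i} ∅ x) - J.sup' hJ (fun j => f {j} ∅ x)) 0
          else
            I.inf' hI (fun i => f {i} ∅ x)) := by
  have h_support (i j : ι) : Function.support (f {i} {j}) ∩ Function.support (f {j} {i}) = ∅ ↔
      ∀ x, f {i} {j} x = 0 ∨ f {j} {i} x = 0 := by
    simp only [← Function.support_mul', Function.support_eq_empty_iff, funext_iff, Pi.mul_apply,
      Pi.zero_apply, mul_eq_zero]
  simp only [h_support, ← gap_of_nonempty]
  constructor
  · rintro ⟨ha, hb⟩ I J hI hIJ x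
    exact IsSandwichSum.eq_gap (fun I J hI hIJ => ha I J hI hIJ x) (fun I J => hf_nonneg I J x)
      (fun i j hij => hb i j hij x) hI hIJ
  · intro h
    have h_split (x : X) : IsSplitAdditive (f · · x) :=
      (isSplitAdditive_gap _).congr fun I J hI hIJ => h I J hI hIJ x
    refine ⟨fun I J hI hIJ x => (h_split x).isSandwichSum I J hI hIJ, fun i j hij x => ?_⟩
    rw [h {i} {j} (singleton_nonempty i) (disjoint_singleton.2 hij),
      h {j} {i} (singleton_nonempty j) (disjoint_singleton.2 hij.symm)]
    exact gap_singleton_eq_zero_or _ i j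

/-- Main theorem (Theorem 1 of the paper): conditions (a) and (b) hold for the family
`{f_{(I,J)}}` if and only if, for every `(I,J) ∈ 𝓘`,
`f_{(I,J)} = (min_{i∈I} f_i − max_{j∈J} f_j)⁺` when `J ≠ ∅` and `f_{(I,∅)} = min_{i∈I} f_i`. -/
theorem s2m_main_theorem {X : Type*} [MeasurableSpace X] {ι : Type*} [Fintype ι] [DecidableEq ι]
    (f : Finset ι → Finset ι → X → ℝ)
    (hf_nonneg : ∀ I J x, 0 ≤ f I J x)
    (hf_meas : ∀ I J, Measurable (f I J)) :
    ((∀ I J : Finset ι, I.Nonempty → Disjoint I J → ∀ x,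
        f I J x = ∑ S ∈ univ.powerset.filter (fun S => I ⊆ S ∧ J ⊆ Sᶜ), f S Sᶜ x) ∧
     (∀ i j : ι, i ≠ j →
        Function.support (f {i} {j}) ∩ Function.support (f {j} {i}) = ∅))
    ↔
    (∀ I J : Finset ι, ∀ hI : I.Nonempty, Disjoint I J → ∀ x,
        f I J x =
          if hJ : J.Nonempty then
            max (I.inf' hI (fun i => f {i} ∅ x) - J.sup' hJ (fun j => f {j} ∅ x)) 0
          else
            I.inf' hI (fun i => f {i} ∅ x)) :=
  s2m_main_theorem_general f hf_nonneg
end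

section
/- Suppose conditions (a) and (b) hold for the family {f_{(I,J)}}. Then for every (I,J) ∈ 𝓘 with J ≠ ∅ and every x ∈ X, f_{(I,J)}(x) = (min_{i∈I} f_i(x) − max_{j∈J} f_j(x))⁺. -/
/-!
Fix `x` and weigh each `S ⊆ N` by `g S = f_{(S, N∖S)}(x) ≥ 0`. By (a), `f_{(I,J)}(x)` is the
`g`-mass of the sets `S` with `I ⊆ S` and `J ∩ S = ∅`. Condition (b) forces the sets of positive
weight to form a chain: incomparable `S`, `T` with `i ∈ S ∖ T`, `j ∈ T ∖ S` would make both
`f_{({i},{j})}(x) ≥ g S` and `f_{({j},{i})}(x) ≥ g T` positive. Hence the families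
`U_i = {S : g S ≠ 0, i ∈ S}` are nested, `f_i(x) = g(U_i)` and
`f_{(I,J)}(x) = g(⋂_{i ∈ I} U_i ∖ ⋃_{j ∈ J} U_j)`. For a nested family the intersection and
the union are attained at some `U_{i₀}` and `U_{j₀}`, and
`g(U_{i₀} ∖ U_{j₀}) = (g(U_{i₀}) - g(U_{j₀}))⁺`.
-/

open Finset

section Lattice

variable {ι β : Type*} [Lattice β] {U : ι → β}

theorem Finset.sup'_mem_image_of_isChain
    (hU : IsChain (· ≤ ·) (Set.range U)) {I : Finset ι} (hI : I.Nonempty) :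
    I.sup' hI U ∈ U '' I := by
  refine sup'_mem (U '' I) ?_ I hI U fun i hi => ⟨i, hi, rfl⟩
  rintro _ ⟨k, hk, rfl⟩ _ ⟨l, hl, rfl⟩
  rcases hU.total ⟨k, rfl⟩ ⟨l, rfl⟩ with h | h
  · exact ⟨l, hl, (sup_eq_right.mpr h).symm⟩
  · exact ⟨k, hk, (sup_eq_left.mpr h).symm⟩

theorem Finset.inf'_mem_image_of_isChain
    (hU : IsChain (· ≤ ·) (Set.range U)) {I : Finset ι} (hI : I.Nonempty) :
    I.inf' hI U ∈ U '' I := by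
  refine inf'_mem (U '' I) ?_ I hI U fun i hi => ⟨i, hi, rfl⟩
  rintro _ ⟨k, hk, rfl⟩ _ ⟨l, hl, rfl⟩
  rcases hU.total ⟨k, rfl⟩ ⟨l, rfl⟩ with h | h
  · exact ⟨k, hk, (inf_eq_left.mpr h).symm⟩
  · exact ⟨l, hl, (inf_eq_right.mpr h).symm⟩

end Lattice

section NestedSum

variable {α ι : Type*} [DecidableEq α] {w : α → ℝ}

theorem Finset.sum_sdiff_eq_max_sub_of_total (hw : ∀ a, 0 ≤ w a) {A B : Finset α}
    (hAB : A ⊆ B ∨ B ⊆ A) :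
    ∑ a ∈ A \ B, w a = max (∑ a ∈ A, w a - ∑ a ∈ B, w a) 0 := by
  rcases hAB with h | h
  · rw [sdiff_eq_empty_iff_subset.mpr h, sum_empty, max_eq_right]
    exact sub_nonpos.mpr (sum_le_sum_of_subset_of_nonneg h fun a _ _ => hw a)
  · rw [sum_sdiff_eq_sub h, max_eq_left]
    exact sub_nonneg.mpr (sum_le_sum_of_subset_of_nonneg h fun a _ _ => hw a)

theorem Finset.sum_inf'_sdiff_sup'_of_isChain (hw : ∀ a, 0 ≤ w a) {U : ι → Finset α}
    (hU : IsChain (· ⊆ ·) (Set.range U)) {I J : Finset ι} (hI : I.Nonempty) (hJ : J.Nonempty) :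
    ∑ a ∈ I.inf' hI U \ J.sup' hJ U, w a =
      max (I.inf' hI (fun i => ∑ a ∈ U i, w a) - J.sup' hJ (fun j => ∑ a ∈ U j, w a)) 0 := by
  have hmono : Monotone fun A : Finset α => ∑ a ∈ A, w a :=
    fun A B h => sum_le_sum_of_subset_of_nonneg h fun a _ _ => hw a
  obtain ⟨i₀, hi₀, hinf⟩ := inf'_mem_image_of_isChain hU hI
  obtain ⟨j₀, hj₀, hsup⟩ := sup'_mem_image_of_isChain hU hJ
  have hinf_sum : I.inf' hI (fun i => ∑ a ∈ U i, w a) = ∑ a ∈ U i₀, w a :=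
    le_antisymm (inf'_le _ hi₀) (le_inf' _ _ fun i hi => hmono (hinf.symm ▸ inf'_le U hi))
  have hsup_sum : J.sup' hJ (fun j => ∑ a ∈ U j, w a) = ∑ a ∈ U j₀, w a :=
    le_antisymm (sup'_le _ _ fun j hj => hmono (hsup.symm ▸ le_sup' U hj))
      (le_sup' (fun j => ∑ a ∈ U j, w a) hj₀)
  rw [← hinf, ← hsup, hinf_sum, hsup_sum]
  exact sum_sdiff_eq_max_sub_of_total hw (hU.total ⟨i₀, rfl⟩ ⟨j₀, rfl⟩)

end NestedSum

variable {ι : Type*} [DecidableEq ι] in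
theorem isChain_range_filter_mem {s : Finset (Finset ι)}
    (hs : IsChain (· ⊆ ·) (s : Set (Finset ι))) :
    IsChain (· ⊆ ·) (Set.range fun i => s.filter (i ∈ ·)) := by
  rintro _ ⟨k, rfl⟩ _ ⟨l, rfl⟩ _
  by_contra! h
  obtain ⟨S, hSk, hSl⟩ := not_subset.mp h.1
  obtain ⟨T, hTl, hTk⟩ := not_subset.mp h.2
  rw [mem_filter] at hSk hSl hTl hTk
  rcases hs.total hSk.1 hTl.1 with hST | hTS
  · exact hTk ⟨hTl.1, hST hSk.2⟩
  · exact hSl ⟨hSk.1, hTS hTl.2⟩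

section IsSumOfAtoms

variable {ι : Type*} [Fintype ι] [DecidableEq ι]

/-- Condition (a) at a single point `x`, with `F I J = f_{(I,J)}(x)`. -/
def IsSumOfAtoms (F : Finset ι → Finset ι → ℝ) : Prop :=
  ∀ I J : Finset ι, I.Nonempty → Disjoint I J →
    F I J = ∑ S ∈ univ.powerset.filter (fun S => I ⊆ S ∧ J ⊆ Sᶜ), F S Sᶜ

namespace IsSumOfAtoms

variable {F : Finset ι → Finset ι → ℝ}

theorem eq_sum_of_mem_iff (ha : IsSumOfAtoms F)
    {I J : Finset ι} (hI : I.Nonempty) (hIJ : Disjoint I J) {T : Finset (Finset ι)}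
    (hT : ∀ S, S ∈ T ↔ F S Sᶜ ≠ 0 ∧ I ⊆ S ∧ J ⊆ Sᶜ) :
    F I J = ∑ S ∈ T, F S Sᶜ := by
  rw [ha I J hI hIJ, ← sum_filter_ne_zero]
  congr 1
  ext S
  simp only [mem_filter, mem_powerset, subset_univ, true_and, hT]
  tauto

theorem atom_le (ha : IsSumOfAtoms F) (hF : ∀ I J, 0 ≤ F I J)
    {I J S : Finset ι} (hI : I.Nonempty) (hIS : I ⊆ S) (hJS : J ⊆ Sᶜ) :
    F S Sᶜ ≤ F I J := by
  rw [ha I J hI (disjoint_compl_right.mono hIS hJS)]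
  exact single_le_sum (f := fun S => F S Sᶜ) (fun T _ => hF T Tᶜ) (by simp [hIS, hJS])

theorem isChain_atom_support (ha : IsSumOfAtoms F) (hF : ∀ I J, 0 ≤ F I J)
    (hb : ∀ i j : ι, i ≠ j → F {i} {j} = 0 ∨ F {j} {i} = 0) :
    IsChain (· ⊆ ·) {S | F S Sᶜ ≠ 0} := by
  intro S hS T hT _
  by_contra! hST
  obtain ⟨i, hiS, hiT⟩ := not_subset.mp hST.1
  obtain ⟨j, hjT, hjS⟩ := not_subset.mp hST.2
  have hpos : ∀ {k l : ι} {R : Finset ι}, F R Rᶜ ≠ 0 → k ∈ R → l ∉ R → 0 < F {k} {l} :=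
    fun hR hk hl => (lt_of_le_of_ne (hF _ _) (Ne.symm hR)).trans_le
      (ha.atom_le hF (singleton_nonempty _) (singleton_subset_iff.mpr hk)
        (singleton_subset_iff.mpr (mem_compl.mpr hl)))
  rcases hb i j (fun h => hjS (h ▸ hiS)) with h | h
  · exact (hpos hS hiS hjS).ne' h
  · exact (hpos hT hjT hiT).ne' h

theorem eq_max_inf'_sub_sup' (ha : IsSumOfAtoms F) (hF : ∀ I J, 0 ≤ F I J)
    (hb : ∀ i j : ι, i ≠ j → F {i} {j} = 0 ∨ F {j} {i} = 0)
    {I J : Finset ι} (hI : I.Nonempty) (hJ : J.Nonempty) (hIJ : Disjoint I J) :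
    F I J = max (I.inf' hI (fun i => F {i} ∅) - J.sup' hJ (fun j => F {j} ∅)) 0 := by
  set s := univ.filter fun S => F S Sᶜ ≠ 0
  set U := fun i => s.filter (i ∈ ·)
  have hU : IsChain (· ⊆ ·) (Set.range U) :=
    isChain_range_filter_mem (by simpa [s] using ha.isChain_atom_support hF hb)
  have hsingle : ∀ i, F {i} ∅ = ∑ S ∈ U i, F S Sᶜ := fun i =>
    ha.eq_sum_of_mem_iff (singleton_nonempty i) (disjoint_empty_right _) (by simp [U, s])
  have hpair : F I J = ∑ S ∈ I.inf' hI U \ J.sup' hJ U, F S Sᶜ :=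
    ha.eq_sum_of_mem_iff hI hIJ fun S => by
      simp only [mem_sdiff, mem_inf', mem_sup', U, s, mem_filter, mem_univ, true_and, not_exists,
        not_and, subset_iff, mem_compl]
      constructor
      · rintro ⟨hIS, hJS⟩
        obtain ⟨i₀, hi₀⟩ := hI
        exact ⟨(hIS i₀ hi₀).1, fun i hi => (hIS i hi).2, fun j hj => hJS j hj (hIS i₀ hi₀).1⟩
      · rintro ⟨hS, hIS, hJS⟩
        exact ⟨fun i hi => ⟨hS, hIS hi⟩, fun j hj _ => hJS hj⟩
  rw [hpair, sum_inf'_sdiff_sup'_of_isChain (fun S => hF S Sᶜ) hU hI hJ]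
  simp only [hsingle]

end IsSumOfAtoms

end IsSumOfAtoms

theorem s2m_necessity_nonempty_diff_general {X : Type*}
    {ι : Type*} [Fintype ι] [DecidableEq ι]
    (f : Finset ι → Finset ι → X → ℝ)
    (hf_nonneg : ∀ I J x, 0 ≤ f I J x)
    (ha : ∀ I J : Finset ι, I.Nonempty → Disjoint I J → ∀ x,
        f I J x = ∑ S ∈ univ.powerset.filter (fun S => I ⊆ S ∧ J ⊆ Sᶜ), f S Sᶜ x)
    (hb : ∀ i j : ι, i ≠ j →
        Function.support (f {i} {j}) ∩ Function.support (f {j} {i}) = ∅) :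
    ∀ I J : Finset ι, ∀ hI : I.Nonempty, ∀ hJ : J.Nonempty, Disjoint I J → ∀ x,
      f I J x =
        max (I.inf' hI (fun i => f {i} ∅ x) - J.sup' hJ (fun j => f {j} ∅ x)) 0 := by
  intro I J hI hJ hIJ x
  have hax : IsSumOfAtoms fun I J => f I J x := fun I J hI hIJ => ha I J hI hIJ x
  refine hax.eq_max_inf'_sub_sup' (fun I J => hf_nonneg I J x) (fun i j hij => ?_) hI hJ hIJ
  by_contra! h
  exact Set.eq_empty_iff_forall_notMem.mp (hb i j hij) x h

/-- Necessity direction of the main theorem, case `J ≠ ∅`: under conditions (a) and (b),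
`f_{(I,J)}(x) = (min_{i∈I} f_i(x) − max_{j∈J} f_j(x))⁺` for every `(I,J) ∈ 𝓘` with `J ≠ ∅`. -/
theorem s2m_necessity_nonempty_diff {X : Type*} [MeasurableSpace X]
    {ι : Type*} [Fintype ι] [DecidableEq ι]
    (f : Finset ι → Finset ι → X → ℝ)
    (hf_nonneg : ∀ I J x, 0 ≤ f I J x)
    (hf_meas : ∀ I J, Measurable (f I J))
    (ha : ∀ I J : Finset ι, I.Nonempty → Disjoint I J → ∀ x,
        f I J x = ∑ S ∈ univ.powerset.filter (fun S => I ⊆ S ∧ J ⊆ Sᶜ), f S Sᶜ x)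
    (hb : ∀ i j : ι, i ≠ j →
        Function.support (f {i} {j}) ∩ Function.support (f {j} {i}) = ∅) :
    ∀ I J : Finset ι, ∀ hI : I.Nonempty, ∀ hJ : J.Nonempty, Disjoint I J → ∀ x,
      f I J x =
        max (I.inf' hI (fun i => f {i} ∅ x) - J.sup' hJ (fun j => f {j} ∅ x)) 0 :=
  s2m_necessity_nonempty_diff_general f hf_nonneg ha hb
end

section
/- Suppose that for every (I,J) ∈ 𝓘 the function f_{(I,J)} equals (min_{i∈I} f_i − max_{j∈J} f_j)⁺ pointwise when J ≠ ∅ and equals min_{i∈I} f_i pointwise when J = ∅. Then condition (a) holds (for every (I,J) ∈ 𝓘, f_{(I,J)} = Σ_{S : I ⊆ S ⊆ N, J ⊆ N∖S} f_{(S,N∖S)}), and condition (b) holds (for all distinct i, j ∈ N, supp f_{({i},{j})} ∩ supp f_{({j},{i})} = ∅). -/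
/-!
Fix a point `x` and write `g i = f_i x`. For `k ∉ I ∪ J`, the identity
`(a - b)⁺ = (min c a - b)⁺ + (a - max c b)⁺` (with `a = min_I g`, `b = max_J g`, `c = g k`)
splits `f_{(I,J)} = f_{(I ∪ {k}, J)} + f_{(I, J ∪ {k})}`. Applying the split to every index
outside `I ∪ J` in turn expands `f_{(I,J)}` into the sum over all `S` with `I ⊆ S ⊆ N ∖ J`,
which is (a). For (b), `(g i - g j)⁺ (g j - g i)⁺ = 0`.
-/

open Finset

section LinearOrder

variable {α : Type*} [AddCommGroup α] [LinearOrder α] [IsOrderedAddMonoid α]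

theorem max_sub_zero_eq_add (a b c : α) :
    max (a - b) 0 = max (min c a - b) 0 + max (a - max c b) 0 := by
  rcases le_total c a with hca | hac <;> rcases le_total c b with hcb | hbc
  · rw [min_eq_left hca, max_eq_right hcb, max_eq_right (sub_nonpos.2 hcb), zero_add]
  · rw [min_eq_left hca, max_eq_left hbc, max_eq_left (sub_nonneg.2 hbc),
      max_eq_left (sub_nonneg.2 hca), max_eq_left (sub_nonneg.2 (hbc.trans hca)),
      sub_add_sub_cancel']
  · rw [min_eq_right hac, max_eq_right hcb, max_eq_right (sub_nonpos.2 (hac.trans hcb)),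
      add_zero]
  · rw [min_eq_right hac, max_eq_left hbc, max_eq_right (sub_nonpos.2 hac), add_zero]

theorem eq_min_add_max_sub_zero (a c : α) : a = min c a + max (a - c) 0 := by
  rcases le_total c a with hca | hac
  · rw [min_eq_left hca, max_eq_left (sub_nonneg.2 hca), add_sub_cancel]
  · rw [min_eq_right hac, max_eq_right (sub_nonpos.2 hac), add_zero]

end LinearOrder

theorem max_sub_zero_mul_max_sub_zero {R : Type*} [Ring R] [LinearOrder R] [IsOrderedRing R]
    (a b : R) :
    max (a - b) 0 * max (b - a) 0 = 0 := by
  rcases le_total a b with hab | hba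
  · rw [max_eq_right (sub_nonpos.2 hab), zero_mul]
  · rw [max_eq_right (sub_nonpos.2 hba), mul_zero]

namespace Finset

variable {ι : Type*}

section InfSubSupPos

variable {α : Type*} [AddCommGroup α] [LinearOrder α]

noncomputable def infSubSupPos (g : ι → α) (I J : Finset ι) (hI : I.Nonempty) : α :=
  if hJ : J.Nonempty then max (I.inf' hI g - J.sup' hJ g) 0 else I.inf' hI g

theorem infSubSupPos_singleton (g : ι → α) (i j : ι) :
    ({i} : Finset ι).infSubSupPos g {j} (singleton_nonempty i) = max (g i - g j) 0 := by
  simp [infSubSupPos]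

theorem infSubSupPos_eq_add_insert [DecidableEq ι] [IsOrderedAddMonoid α] (g : ι → α)
    {I : Finset ι} (hI : I.Nonempty) (J : Finset ι) (k : ι) :
    I.infSubSupPos g J hI =
      (insert k I).infSubSupPos g J (insert_nonempty k I) + I.infSubSupPos g (insert k J) hI := by
  unfold infSubSupPos
  rw [dif_pos (insert_nonempty k J), inf'_insert]
  rcases J.eq_empty_or_nonempty with rfl | hJ
  · simp only [not_nonempty_empty, dite_false, insert_empty_eq, sup'_singleton]
    exact eq_min_add_max_sub_zero _ _
  · rw [dif_pos hJ, dif_pos hJ, sup'_insert]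
    exact max_sub_zero_eq_add _ _ _

end InfSubSupPos

variable [DecidableEq ι]

theorem sum_Icc_eq_add_sum_Icc_erase {M : Type*} [AddCommMonoid M] (g : Finset ι → M)
    (I T : Finset ι) (k : ι) :
    ∑ S ∈ Icc I T, g S =
      ∑ S ∈ Icc (insert k I) T, g S + ∑ S ∈ Icc I (T.erase k), g S := by
  rw [← sum_filter_add_sum_filter_not _ (k ∈ ·)]
  congr 2 <;> ext S
  · simp only [mem_filter, mem_Icc, insert_subset_iff]
    tauto
  · simp only [mem_filter, mem_Icc, subset_erase]
    tauto

variable [Fintype ι]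

theorem filter_subset_and_subset_compl_eq_Icc (I J : Finset ι) :
    univ.powerset.filter (fun S => I ⊆ S ∧ J ⊆ Sᶜ) = Icc I Jᶜ := by
  ext S
  simp only [mem_filter, mem_powerset, subset_univ, true_and, mem_Icc, subset_compl_comm]

theorem sum_Icc_compl_eq_of_split {M : Type*} [AddCommMonoid M] (F : Finset ι → Finset ι → M)
    (hsplit : ∀ I J k, I.Nonempty → Disjoint I J → k ∉ I → k ∉ J →
      F I J = F (insert k I) J + F I (insert k J))
    {I J : Finset ι} (hI : I.Nonempty) (hIJ : Disjoint I J) :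
    ∑ S ∈ Icc I Jᶜ, F S Sᶜ = F I J := by
  induction hn : #(I ∪ J)ᶜ generalizing I J with
  | zero =>
    have hIJc : I = Jᶜ := eq_compl_iff_isCompl.2
      ⟨hIJ, codisjoint_iff.2 ((compl_eq_empty_iff _).1 (card_eq_zero.1 hn))⟩
    rw [← hIJc, Icc_self, sum_singleton, hIJc, compl_compl]
  | succ n ih =>
    obtain ⟨k, hk⟩ : ((I ∪ J)ᶜ).Nonempty := card_pos.1 (hn ▸ n.succ_pos)
    have hkIJ := mem_compl.1 hk
    have hkI : k ∉ I := fun h => hkIJ (mem_union_left J h)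
    have hkJ : k ∉ J := fun h => hkIJ (mem_union_right I h)
    have hcard : #((I ∪ J)ᶜ.erase k) = n := by rw [card_erase_of_mem hk, hn, Nat.add_sub_cancel]
    rw [sum_Icc_eq_add_sum_Icc_erase, ← compl_insert,
      ih (insert_nonempty k I) (disjoint_insert_left.2 ⟨hkJ, hIJ⟩)
        (by rwa [insert_union, compl_insert]),
      ih hI (disjoint_insert_right.2 ⟨hkI, hIJ⟩) (by rwa [union_insert, compl_insert]),
      hsplit I J k hI hIJ hkI hkJ]

end Finset

theorem s2m_sufficiency_general {X : Type*}
    {ι : Type*} [Fintype ι] [DecidableEq ι]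
    (f : Finset ι → Finset ι → X → ℝ)
    (hform : ∀ I J : Finset ι, ∀ hI : I.Nonempty, Disjoint I J → ∀ x,
        f I J x =
          if hJ : J.Nonempty then
            max (I.inf' hI (fun i => f {i} ∅ x) - J.sup' hJ (fun j => f {j} ∅ x)) 0
          else
            I.inf' hI (fun i => f {i} ∅ x)) :
    (∀ I J : Finset ι, I.Nonempty → Disjoint I J → ∀ x,
        f I J x = ∑ S ∈ univ.powerset.filter (fun S => I ⊆ S ∧ J ⊆ Sᶜ), f S Sᶜ x) ∧
    (∀ i j : ι, i ≠ j →
        Function.support (f {i} {j}) ∩ Function.support (f {j} {i}) = ∅) := by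
  have hf : ∀ I J hI, Disjoint I J → ∀ x, f I J x = I.infSubSupPos (f {·} ∅ x) J hI :=
    hform
  refine ⟨fun I J hI hIJ x => ?_, fun i j hij => ?_⟩
  · rw [filter_subset_and_subset_compl_eq_Icc]
    refine (sum_Icc_compl_eq_of_split (f · · x) (fun I J k hI hIJ hkI hkJ => ?_) hI hIJ).symm
    rw [hf I J hI hIJ, hf _ J _ (disjoint_insert_left.2 ⟨hkJ, hIJ⟩),
      hf I _ hI (disjoint_insert_right.2 ⟨hkI, hIJ⟩)]
    exact infSubSupPos_eq_add_insert _ hI J k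
  · have hprod : ∀ x, f {i} {j} x * f {j} {i} x = 0 := fun x => by
      rw [hf _ _ (singleton_nonempty i) (disjoint_singleton.2 hij),
        hf _ _ (singleton_nonempty j) (disjoint_singleton.2 hij.symm),
        infSubSupPos_singleton, infSubSupPos_singleton]
      exact max_sub_zero_mul_max_sub_zero _ _
    rw [← Function.support_mul, Function.support_eq_empty_iff]
    exact funext hprod

/-- Sufficiency direction of the main theorem: if for every `(I,J) ∈ 𝓘` the function
`f_{(I,J)}` equals `(min_{i∈I} f_i − max_{j∈J} f_j)⁺` when `J ≠ ∅` and `min_{i∈I} f_i`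
when `J = ∅`, then conditions (a) and (b) hold. -/
theorem s2m_sufficiency {X : Type*} [MeasurableSpace X]
    {ι : Type*} [Fintype ι] [DecidableEq ι]
    (f : Finset ι → Finset ι → X → ℝ)
    (hf_nonneg : ∀ I J x, 0 ≤ f I J x)
    (hf_meas : ∀ I J, Measurable (f I J))
    (hform : ∀ I J : Finset ι, ∀ hI : I.Nonempty, Disjoint I J → ∀ x,
        f I J x =
          if hJ : J.Nonempty then
            max (I.inf' hI (fun i => f {i} ∅ x) - J.sup' hJ (fun j => f {j} ∅ x)) 0
          else
            I.inf' hI (fun i => f {i} ∅ x)) :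
    (∀ I J : Finset ι, I.Nonempty → Disjoint I J → ∀ x,
        f I J x = ∑ S ∈ univ.powerset.filter (fun S => I ⊆ S ∧ J ⊆ Sᶜ), f S Sᶜ x) ∧
    (∀ i j : ι, i ≠ j →
        Function.support (f {i} {j}) ∩ Function.support (f {j} {i}) = ∅) :=
  s2m_sufficiency_general f hform
end

section
/- Suppose conditions (a) and (b) hold for the family {f_{(I,J)}}. Then for all (I₁,J₁), (I₂,J₂) ∈ 𝓘 such that I₁ ∩ J₂ ≠ ∅ and J₁ ∩ I₂ ≠ ∅, one has supp f_{(I₁,J₁)} ∩ supp f_{(I₂,J₂)} = ∅. -/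
/-!
By (a) and non-negativity, the support of `f_{(I,J)}` is the union of the supports of the atoms
`f_{(S,Sᶜ)}` with `I ⊆ S`, `J ⊆ Sᶜ`; hence the support only shrinks as `I` and `J` grow. Choosing
`i ∈ I₁ ∩ J₂` and `j ∈ J₁ ∩ I₂` puts the two supports inside those of `f_{({i},{j})}` and
`f_{({j},{i})}`, which are disjoint by (b).
-/

open Finset

section Decomposition

variable {X ι : Type*} [Fintype ι] [DecidableEq ι] {f : Finset ι → Finset ι → X → ℝ}

theorem ne_zero_iff_exists_atom_ne_zero (hf_nonneg : ∀ I J x, 0 ≤ f I J x)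
    (ha : ∀ I J : Finset ι, I.Nonempty → Disjoint I J → ∀ x,
        f I J x = ∑ S ∈ univ.powerset.filter (fun S => I ⊆ S ∧ J ⊆ Sᶜ), f S Sᶜ x)
    {I J : Finset ι} (hI : I.Nonempty) (hIJ : Disjoint I J) (x : X) :
    f I J x ≠ 0 ↔ ∃ S, I ⊆ S ∧ J ⊆ Sᶜ ∧ f S Sᶜ x ≠ 0 := by
  rw [ha I J hI hIJ x, Ne, sum_eq_zero_iff_of_nonneg fun S _ => hf_nonneg S Sᶜ x]
  simp

theorem support_anti (hf_nonneg : ∀ I J x, 0 ≤ f I J x)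
    (ha : ∀ I J : Finset ι, I.Nonempty → Disjoint I J → ∀ x,
        f I J x = ∑ S ∈ univ.powerset.filter (fun S => I ⊆ S ∧ J ⊆ Sᶜ), f S Sᶜ x)
    {I J I' J' : Finset ι} (hI' : I'.Nonempty) (hII' : I' ⊆ I) (hJJ' : J' ⊆ J)
    (hIJ : Disjoint I J) :
    Function.support (f I J) ⊆ Function.support (f I' J') := by
  intro x hx
  obtain ⟨S, hIS, hJS, hS⟩ :=
    (ne_zero_iff_exists_atom_ne_zero hf_nonneg ha (hI'.mono hII') hIJ x).1 hx
  exact (ne_zero_iff_exists_atom_ne_zero hf_nonneg ha hI' (hIJ.mono hII' hJJ') x).2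
    ⟨S, hII'.trans hIS, hJJ'.trans hJS, hS⟩

end Decomposition

theorem s2m_disjoint_supports_general {X : Type*}
    {ι : Type*} [Fintype ι] [DecidableEq ι]
    (f : Finset ι → Finset ι → X → ℝ)
    (hf_nonneg : ∀ I J x, 0 ≤ f I J x)
    (ha : ∀ I J : Finset ι, I.Nonempty → Disjoint I J → ∀ x,
        f I J x = ∑ S ∈ univ.powerset.filter (fun S => I ⊆ S ∧ J ⊆ Sᶜ), f S Sᶜ x)
    (hb : ∀ i j : ι, i ≠ j →
        Function.support (f {i} {j}) ∩ Function.support (f {j} {i}) = ∅) :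
    ∀ I₁ J₁ I₂ J₂ : Finset ι,
      I₁.Nonempty → Disjoint I₁ J₁ → I₂.Nonempty → Disjoint I₂ J₂ →
      (I₁ ∩ J₂).Nonempty → (J₁ ∩ I₂).Nonempty →
      Function.support (f I₁ J₁) ∩ Function.support (f I₂ J₂) = ∅ := by
  intro I₁ J₁ I₂ J₂ _ hD₁ _ hD₂ ⟨i, hi⟩ ⟨j, hj⟩
  rw [mem_inter] at hi hj
  have hij : i ≠ j := fun h => disjoint_left.1 hD₂ hj.2 (h ▸ hi.2)
  rw [← Set.subset_empty_iff, ← hb i j hij]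
  exact Set.inter_subset_inter
    (support_anti hf_nonneg ha (singleton_nonempty i) (singleton_subset_iff.2 hi.1)
      (singleton_subset_iff.2 hj.1) hD₁)
    (support_anti hf_nonneg ha (singleton_nonempty j) (singleton_subset_iff.2 hj.2)
      (singleton_subset_iff.2 hi.2) hD₂)

/-- Lemma 1 of the paper: under conditions (a) and (b), for all `(I₁,J₁), (I₂,J₂) ∈ 𝓘` with
`I₁ ∩ J₂ ≠ ∅` and `J₁ ∩ I₂ ≠ ∅`, the supports of `f_{(I₁,J₁)}` and `f_{(I₂,J₂)}` are disjoint. -/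
theorem s2m_disjoint_supports {X : Type*} [MeasurableSpace X]
    {ι : Type*} [Fintype ι] [DecidableEq ι]
    (f : Finset ι → Finset ι → X → ℝ)
    (hf_nonneg : ∀ I J x, 0 ≤ f I J x)
    (hf_meas : ∀ I J, Measurable (f I J))
    (ha : ∀ I J : Finset ι, I.Nonempty → Disjoint I J → ∀ x,
        f I J x = ∑ S ∈ univ.powerset.filter (fun S => I ⊆ S ∧ J ⊆ Sᶜ), f S Sᶜ x)
    (hb : ∀ i j : ι, i ≠ j →
        Function.support (f {i} {j}) ∩ Function.support (f {j} {i}) = ∅) :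
    ∀ I₁ J₁ I₂ J₂ : Finset ι,
      I₁.Nonempty → Disjoint I₁ J₁ → I₂.Nonempty → Disjoint I₂ J₂ →
      (I₁ ∩ J₂).Nonempty → (J₁ ∩ I₂).Nonempty →
      Function.support (f I₁ J₁) ∩ Function.support (f I₂ J₂) = ∅ :=
  s2m_disjoint_supports_general f hf_nonneg ha hb
end

section
/- Suppose conditions (a) and (b) hold for the family {f_{(I,J)}}. Then for every i ∈ N and every I ⊆ N with {i} strictly contained in I, one has supp f_{(I∖{i},{i})} ∩ supp (Σ_{S : i ∈ S ⊆ N, I ⊄ S} f_{(S,N∖S)}) = ∅. -/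
open Finset

section AtomDecomposition

variable {X ι M : Type*} [Fintype ι] [DecidableEq ι]
  [AddCommMonoid M] [PartialOrder M] [IsOrderedAddMonoid M]
  {f : Finset ι → Finset ι → X → M}

/-- Shrinking `(I, J)` only enlarges the set of non-negative atoms `f S Sᶜ` summed in (a). -/
theorem le_of_subset_of_atom_decomposition (hf_nonneg : ∀ I J x, 0 ≤ f I J x)
    (ha : ∀ I J : Finset ι, I.Nonempty → Disjoint I J → ∀ x,
        f I J x = ∑ S ∈ univ.powerset.filter (fun S => I ⊆ S ∧ J ⊆ Sᶜ), f S Sᶜ x)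
    {I J I' J' : Finset ι} (hI' : I'.Nonempty) (hIJ : Disjoint I J) (hII' : I' ⊆ I)
    (hJJ' : J' ⊆ J) (x : X) : f I J x ≤ f I' J' x := by
  rw [ha I J (hI'.mono hII') hIJ, ha I' J' hI' (hIJ.mono hII' hJJ')]
  refine sum_le_sum_of_subset_of_nonneg (fun S hS => ?_) (fun S _ _ => hf_nonneg S Sᶜ x)
  simp only [mem_filter, mem_powerset] at hS ⊢
  exact ⟨hS.1, hII'.trans hS.2.1, hJJ'.trans hS.2.2⟩

theorem support_subset_of_atom_decomposition (hf_nonneg : ∀ I J x, 0 ≤ f I J x)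
    (ha : ∀ I J : Finset ι, I.Nonempty → Disjoint I J → ∀ x,
        f I J x = ∑ S ∈ univ.powerset.filter (fun S => I ⊆ S ∧ J ⊆ Sᶜ), f S Sᶜ x)
    {I J I' J' : Finset ι} (hI' : I'.Nonempty) (hIJ : Disjoint I J) (hII' : I' ⊆ I)
    (hJJ' : J' ⊆ J) : Function.support (f I J) ⊆ Function.support (f I' J') := by
  intro x hx hx'
  exact hx <| le_antisymm
    (hx' ▸ le_of_subset_of_atom_decomposition hf_nonneg ha hI' hIJ hII' hJJ' x)
    (hf_nonneg I J x)

end AtomDecomposition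

theorem s2m_disjoint_sum_general {X : Type*}
    {ι : Type*} [Fintype ι] [DecidableEq ι]
    (f : Finset ι → Finset ι → X → ℝ)
    (hf_nonneg : ∀ I J x, 0 ≤ f I J x)
    (ha : ∀ I J : Finset ι, I.Nonempty → Disjoint I J → ∀ x,
        f I J x = ∑ S ∈ univ.powerset.filter (fun S => I ⊆ S ∧ J ⊆ Sᶜ), f S Sᶜ x)
    (hb : ∀ i j : ι, i ≠ j →
        Function.support (f {i} {j}) ∩ Function.support (f {j} {i}) = ∅) :
    ∀ (i : ι) (I : Finset ι), {i} ⊂ I →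
      Function.support (f (I \ {i}) {i}) ∩
        Function.support (fun x =>
          ∑ S ∈ univ.powerset.filter (fun S => i ∈ S ∧ ¬ I ⊆ S), f S Sᶜ x) = ∅ := by
  intro i I _
  refine Set.eq_empty_of_forall_notMem fun x ⟨hx_left, hx_right⟩ => ?_
  -- A nonzero atom `f S Sᶜ` of the sum has some `j ∈ I \ S`, and then `x` lies in the
  -- supports of both `f {i} {j}` and `f {j} {i}`.
  obtain ⟨S, hS, hSx⟩ := exists_ne_zero_of_sum_ne_zero hx_right
  simp only [mem_filter, mem_powerset] at hS
  obtain ⟨-, hiS, hIS⟩ := hS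
  obtain ⟨j, hjI, hjS⟩ := not_subset.mp hIS
  have hij : i ≠ j := by rintro rfl; exact hjS hiS
  have hij_supp : x ∈ Function.support (f {i} {j}) :=
    support_subset_of_atom_decomposition hf_nonneg ha (singleton_nonempty i) disjoint_compl_right
      (singleton_subset_iff.mpr hiS) (singleton_subset_iff.mpr (mem_compl.mpr hjS)) hSx
  have hji_supp : x ∈ Function.support (f {j} {i}) :=
    support_subset_of_atom_decomposition hf_nonneg ha (singleton_nonempty j) sdiff_disjoint
      (singleton_subset_iff.mpr (mem_sdiff.mpr ⟨hjI, notMem_singleton.mpr hij.symm⟩))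
      subset_rfl hx_left
  exact (hb i j hij).subset ⟨hij_supp, hji_supp⟩

/-- Lemma 2 of the paper: under conditions (a) and (b), for every `i ∈ N` and `I ⊆ N` with
`{i} ⊊ I`, the support of `f_{(I∖{i},{i})}` is disjoint from the support of
`Σ_{S : i ∈ S ⊆ N, I ⊄ S} f_{(S, N∖S)}`. -/
theorem s2m_disjoint_sum {X : Type*} [MeasurableSpace X]
    {ι : Type*} [Fintype ι] [DecidableEq ι]
    (f : Finset ι → Finset ι → X → ℝ)
    (hf_nonneg : ∀ I J x, 0 ≤ f I J x)
    (hf_meas : ∀ I J, Measurable (f I J))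
    (ha : ∀ I J : Finset ι, I.Nonempty → Disjoint I J → ∀ x,
        f I J x = ∑ S ∈ univ.powerset.filter (fun S => I ⊆ S ∧ J ⊆ Sᶜ), f S Sᶜ x)
    (hb : ∀ i j : ι, i ≠ j →
        Function.support (f {i} {j}) ∩ Function.support (f {j} {i}) = ∅) :
    ∀ (i : ι) (I : Finset ι), {i} ⊂ I →
      Function.support (f (I \ {i}) {i}) ∩
        Function.support (fun x =>
          ∑ S ∈ univ.powerset.filter (fun S => i ∈ S ∧ ¬ I ⊆ S), f S Sᶜ x) = ∅ :=
  s2m_disjoint_sum_general f hf_nonneg ha hb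
end

section
/- Suppose conditions (a) and (b) hold for the family {f_{(I,J)}}. Then for every nonempty I ⊆ N and every x ∈ X, f_{(I,∅)}(x) = min_{i∈I} f_i(x). -/
/-!
Fix `x` and put `g S := f_{(S, N∖S)}(x) ≥ 0`. By (a), `f_{(I,∅)}(x)` is the sum of `g S` over
`S ⊇ I`, and `f_{({i},{j})}(x) ≥ g S` whenever `i ∈ S ∌ j`. Condition (b) therefore forbids two
incomparable sets in the support of `g`, so that support is a chain. For a nonnegative `g` with
chain support, the sum over `S ⊇ I` equals the smallest of the sums over `S ∋ i`, `i ∈ I`: if `i₀`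
minimises the latter, every supporting `S ∋ i₀` contains all of `I`, since a supporting set
containing `i₀` but not `i` would make the sum for `i` strictly smaller.
-/

open Finset Function

section ChainSupport

variable {ι M : Type*} [Fintype ι] [DecidableEq ι]
  [AddCommMonoid M] [LinearOrder M] [IsOrderedCancelAddMonoid M] {g : Finset ι → M}

theorem sum_mem_lt_sum_mem_of_isChain_support (hg : 0 ≤ g)
    (hchain : IsChain (· ⊆ ·) (support g)) {i j : ι} {S : Finset ι}
    (hS : g S ≠ 0) (hjS : j ∈ S) (hiS : i ∉ S) :
    ∑ T with i ∈ T, g T < ∑ T with j ∈ T, g T := by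
  simp only [sum_filter]
  refine sum_lt_sum (fun T _ => ?_) ⟨S, mem_univ S, by simpa [hiS, hjS] using (hg S).lt_of_ne' hS⟩
  split_ifs with hiT hjT hjT
  · exact le_rfl
  · have hT : g T = 0 := by
      by_contra hT
      rcases hchain.total hT hS with hTS | hST
      exacts [hiS (hTS hiT), hjT (hST hjS)]
    exact hT.le
  · exact hg T
  · exact le_rfl

theorem sum_superset_eq_inf'_of_isChain_support (hg : 0 ≤ g)
    (hchain : IsChain (· ⊆ ·) (support g)) {I : Finset ι} (hI : I.Nonempty) :
    ∑ S with I ⊆ S, g S = I.inf' hI fun i => ∑ S with i ∈ S, g S := by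
  obtain ⟨i₀, hi₀, hmin⟩ := I.exists_min_image (fun i => ∑ S with i ∈ S, g S) hI
  refine le_antisymm (le_inf' hI _ fun i hi => ?_) ((inf'_le _ hi₀).trans ?_)
  · exact sum_le_sum_of_subset_of_nonneg (monotone_filter_right _ fun _ _ hIS => hIS hi)
      fun S _ _ => hg S
  · simp only [sum_filter]
    refine sum_le_sum fun S _ => ?_
    by_cases hS : g S = 0
    · simp [hS]
    split_ifs with hi₀S hIS hIS
    · exact le_rfl
    · obtain ⟨i, hi, hiS⟩ := not_subset.1 hIS
      exact absurd (hmin i hi)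
        (not_le.2 (sum_mem_lt_sum_mem_of_isChain_support hg hchain hS hi₀S hiS))
    · exact hg S
    · exact le_rfl

end ChainSupport

section Decomposition

variable {X ι : Type*} [Fintype ι] [DecidableEq ι] {f : Finset ι → Finset ι → X → ℝ}
  (ha : ∀ I J : Finset ι, I.Nonempty → Disjoint I J → ∀ x,
    f I J x = ∑ S ∈ univ.powerset.filter (fun S => I ⊆ S ∧ J ⊆ Sᶜ), f S Sᶜ x)
include ha

theorem apply_empty_eq_sum_superset {I : Finset ι} (hI : I.Nonempty) (x : X) :
    f I ∅ x = ∑ S with I ⊆ S, f S Sᶜ x := by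
  rw [ha I ∅ hI (disjoint_empty_right I) x, powerset_univ]
  simp only [empty_subset, and_true]

theorem apply_compl_le_of_subset (hf_nonneg : ∀ I J x, 0 ≤ f I J x) {I J S : Finset ι}
    (hI : I.Nonempty) (hIJ : Disjoint I J) (hIS : I ⊆ S) (hJS : J ⊆ Sᶜ) (x : X) :
    f S Sᶜ x ≤ f I J x := by
  rw [ha I J hI hIJ x]
  exact single_le_sum (fun T _ => hf_nonneg T Tᶜ x) (by simp [hIS, hJS])

theorem isChain_support_apply_compl (hf_nonneg : ∀ I J x, 0 ≤ f I J x)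
    (hb : ∀ i j : ι, i ≠ j →
      Function.support (f {i} {j}) ∩ Function.support (f {j} {i}) = ∅) (x : X) :
    IsChain (· ⊆ ·) (support fun S => f S Sᶜ x) := by
  have mem_support : ∀ {S : Finset ι} {i j : ι}, i ≠ j → i ∈ S → j ∉ S → f S Sᶜ x ≠ 0 →
      x ∈ support (f {i} {j}) := fun {S i _} hij hiS hjS hS =>
    (((hf_nonneg S Sᶜ x).lt_of_ne' hS).trans_le (apply_compl_le_of_subset ha hf_nonneg
      (singleton_nonempty i) (disjoint_singleton.2 hij) (singleton_subset_iff.2 hiS)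
      (singleton_subset_iff.2 (mem_compl.2 hjS)) x)).ne'
  intro S hS T hT _
  by_contra! h
  obtain ⟨i, hiS, hiT⟩ := not_subset.1 h.1
  obtain ⟨j, hjT, hjS⟩ := not_subset.1 h.2
  have hij : i ≠ j := by rintro rfl; exact hjS hiS
  exact Set.eq_empty_iff_forall_notMem.1 (hb i j hij) x
    ⟨mem_support hij hiS hjS hS, mem_support hij.symm hjT hiT hT⟩

end Decomposition

theorem s2m_min_formula_general {X : Type*}
    {ι : Type*} [Fintype ι] [DecidableEq ι]
    (f : Finset ι → Finset ι → X → ℝ)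
    (hf_nonneg : ∀ I J x, 0 ≤ f I J x)
    (ha : ∀ I J : Finset ι, I.Nonempty → Disjoint I J → ∀ x,
        f I J x = ∑ S ∈ univ.powerset.filter (fun S => I ⊆ S ∧ J ⊆ Sᶜ), f S Sᶜ x)
    (hb : ∀ i j : ι, i ≠ j →
        Function.support (f {i} {j}) ∩ Function.support (f {j} {i}) = ∅) :
    ∀ (I : Finset ι) (hI : I.Nonempty) (x : X),
      f I ∅ x = I.inf' hI (fun i => f {i} ∅ x) := by
  intro I hI x
  rw [apply_empty_eq_sum_superset ha hI, sum_superset_eq_inf'_of_isChain_support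
    (fun S => hf_nonneg S Sᶜ x) (isChain_support_apply_compl ha hf_nonneg hb x) hI]
  refine inf'_congr hI rfl fun i _ => ?_
  rw [apply_empty_eq_sum_superset ha (singleton_nonempty i)]
  simp only [singleton_subset_iff]

/-- Lemma 3 of the paper: under conditions (a) and (b), for every nonempty `I ⊆ N`,
`f_{(I,∅)} = min_{i∈I} f_i` pointwise. -/
theorem s2m_min_formula {X : Type*} [MeasurableSpace X]
    {ι : Type*} [Fintype ι] [DecidableEq ι]
    (f : Finset ι → Finset ι → X → ℝ)
    (hf_nonneg : ∀ I J x, 0 ≤ f I J x)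
    (hf_meas : ∀ I J, Measurable (f I J))
    (ha : ∀ I J : Finset ι, I.Nonempty → Disjoint I J → ∀ x,
        f I J x = ∑ S ∈ univ.powerset.filter (fun S => I ⊆ S ∧ J ⊆ Sᶜ), f S Sᶜ x)
    (hb : ∀ i j : ι, i ≠ j →
        Function.support (f {i} {j}) ∩ Function.support (f {j} {i}) = ∅) :
    ∀ (I : Finset ι) (hI : I.Nonempty) (x : X),
      f I ∅ x = I.inf' hI (fun i => f {i} ∅ x) :=
  s2m_min_formula_general f hf_nonneg ha hb
end

section
/- Let I and J be finite, nonempty, disjoint sets and let f : I ∪ J → ℝ be any function. Then the alternating sum over subsets of J of the minimum of f over I ∪ S satisfies Σ_{S ⊆ J} (−1)^{|S|} min_{i ∈ I∪S} f(i) = (min_{i∈I} f(i) − max_{j∈J} f(j))⁺, where for S = ∅ the term is min_{i∈I} f(i). -/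
/-!
Removing an element `a` from `J` splits the alternating sum into the sum for `J` minus the sum
for `J` with `f` replaced by `min f (f a)`, because `min_{I ∪ S ∪ {a}} f = min_{I ∪ S} (min f (f a))`.
Induction on `J` thus reduces the theorem to the identity
`(A - B)⁺ - (min A C - min B C)⁺ = (A - max C B)⁺` in a linearly ordered group.
-/

open Finset

section LinearOrderedAddCommGroup
variable {α : Type*} [AddCommGroup α] [LinearOrder α] [IsOrderedAddMonoid α]

lemma sub_inf_eq_max_sub_zero (a c : α) : a - a ⊓ c = max (a - c) 0 := by
  rcases le_total a c with h | h <;> simp [h]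

lemma max_sub_zero_sub_max_inf_sub_inf_zero (a b c : α) :
    max (a - b) 0 - max (a ⊓ c - b ⊓ c) 0 = max (a - c ⊔ b) 0 := by
  simp only [min_def, max_def]
  split_ifs <;> grind

end LinearOrderedAddCommGroup

lemma Finset.inf'_inf_const {ι α : Type*} [SemilatticeInf α] (s : Finset ι) (hs : s.Nonempty)
    (f : ι → α) (c : α) : s.inf' hs (fun i => f i ⊓ c) = s.inf' hs f ⊓ c :=
  (apply_inf'_eq_inf'_comp hs (· ⊓ c) fun x y => inf_inf_distrib_right x y c).symm

section AlternatingInfSum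
variable {ι R : Type*} [DecidableEq ι] [CommRing R] [LinearOrder R]

def alternatingInfSum (I : Finset ι) (hI : I.Nonempty) (J : Finset ι) (f : ι → R) : R :=
  ∑ S ∈ J.powerset, (-1 : R) ^ S.card * (I ∪ S).inf' (hI.mono subset_union_left) f

variable (I : Finset ι) (hI : I.Nonempty)

lemma alternatingInfSum_empty (f : ι → R) : alternatingInfSum I hI ∅ f = I.inf' hI f := by
  simp [alternatingInfSum]

lemma alternatingInfSum_insert {J : Finset ι} {a : ι} (ha : a ∉ J) (f : ι → R) :
    alternatingInfSum I hI (insert a J) f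
      = alternatingInfSum I hI J f - alternatingInfSum I hI J (fun i => f i ⊓ f a) := by
  rw [alternatingInfSum, sum_powerset_insert ha, sub_eq_add_neg, alternatingInfSum,
    alternatingInfSum, ← sum_neg_distrib]
  congr 1
  refine sum_congr rfl fun S hS => ?_
  have haS : a ∉ S := fun h => ha (mem_powerset.mp hS h)
  have hinf : (I ∪ insert a S).inf' (hI.mono subset_union_left) f
      = (I ∪ S).inf' (hI.mono subset_union_left) (fun i => f i ⊓ f a) := by
    simp only [union_insert]
    rw [inf'_insert, inf'_inf_const, inf_comm]
  rw [card_insert_of_notMem haS, pow_succ, hinf]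
  ring

theorem alternatingInfSum_eq_max_inf'_sub_sup' [IsOrderedRing R] {J : Finset ι}
    (hJ : J.Nonempty) (f : ι → R) :
    alternatingInfSum I hI J f = max (I.inf' hI f - J.sup' hJ f) 0 := by
  induction hJ using Finset.Nonempty.cons_induction generalizing f with
  | singleton a =>
    rw [sup'_singleton, ← insert_empty, alternatingInfSum_insert I hI (notMem_empty a),
      alternatingInfSum_empty, alternatingInfSum_empty, inf'_inf_const, sub_inf_eq_max_sub_zero]
  | cons a J ha hJ ih =>
    rw [sup'_cons, cons_eq_insert, alternatingInfSum_insert I hI ha, ih, ih, inf'_inf_const,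
      ← sup'_inf_distrib_right, max_sub_zero_sub_max_inf_sub_inf_zero]

end AlternatingInfSum

theorem alternating_min_sum_general {ι : Type*} [DecidableEq ι]
    (I J : Finset ι) (hI : I.Nonempty) (hJ : J.Nonempty)
    (f : ι → ℝ) :
    ∑ S ∈ J.powerset, (-1 : ℝ) ^ S.card * (I ∪ S).inf' (hI.mono subset_union_left) f
      = max (I.inf' hI f - J.sup' hJ f) 0 :=
  alternatingInfSum_eq_max_inf'_sub_sup' I hI hJ f

/-- Alternating-sum identity: for finite, nonempty, disjoint sets `I`, `J` and any `f`,
`Σ_{S ⊆ J} (−1)^{|S|} min_{i∈I∪S} f(i) = (min_{i∈I} f(i) − max_{j∈J} f(j))⁺`. -/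
theorem alternating_min_sum {ι : Type*} [DecidableEq ι]
    (I J : Finset ι) (hI : I.Nonempty) (hJ : J.Nonempty) (hd : Disjoint I J)
    (f : ι → ℝ) :
    ∑ S ∈ J.powerset, (-1 : ℝ) ^ S.card * (I ∪ S).inf' (hI.mono subset_union_left) f
      = max (I.inf' hI f - J.sup' hJ f) 0 :=
  alternating_min_sum_general I J hI hJ f
end

section
/- Let μ be a measure on X, let (I,J) ∈ 𝓘 with J ≠ ∅, and suppose the family {f_{(I,J)}} satisfies conditions (a) and (b). Let π_c > 0 for each c ∈ N, let g_c : X → [0,∞) be measurable functions with f_c = π_c · g_c pointwise, and set π_{(I,J)} := ∫_X f_{(I,J)} dμ. If π_{(I,J)} > 0, then the normalized density p_{(I,J)} := f_{(I,J)} / π_{(I,J)} satisfies, for every x ∈ X, p_{(I,J)}(x) = π_{(I,J)}^{−1} · (min_{i∈I} π_i g_i(x) − max_{j∈J} π_j g_j(x))⁺. -/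
/-!
Fix `x` and regard the atoms `w S = f_{(S, N∖S)}(x)` as non-negative weights on subsets of `N`.
Condition (b) forces the atoms with `w S ≠ 0` to form a chain under inclusion, because two
incomparable ones would give some `i ∈ S ∖ T`, `j ∈ T ∖ S` with both `f_{({i},{j})}(x)` and
`f_{({j},{i})}(x)` positive. Then the sets `A_c` of nonzero atoms containing `c` are totally
ordered, so some `A_{i₀}` (`i₀ ∈ I`) is contained in all `A_i`, `i ∈ I`, and some `A_{j₀}`
(`j₀ ∈ J`) contains all `A_j`, `j ∈ J`. By (a), `f_c(x)` is the weight of `A_c` and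
`f_{(I,J)}(x)` is the weight of `A_{i₀} ∖ A_{j₀}`, which for nested sets is the positive part of
the difference of the weights.
-/

open Finset MeasureTheory

section TotalFamily

variable {ι β : Type*} [Preorder β]

theorem Finset.exists_mem_forall_le_of_total {s : Finset ι} (hs : s.Nonempty) (u : ι → β)
    (htot : ∀ i j, u i ≤ u j ∨ u j ≤ u i) : ∃ i₀ ∈ s, ∀ i ∈ s, u i₀ ≤ u i := by
  obtain ⟨i₀, hi₀, hmin⟩ := s.exists_minimalFor u hs
  exact ⟨i₀, hi₀, fun i hi => (htot i₀ i).elim id (hmin hi)⟩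

theorem Finset.exists_mem_forall_ge_of_total {s : Finset ι} (hs : s.Nonempty) (u : ι → β)
    (htot : ∀ i j, u i ≤ u j ∨ u j ≤ u i) : ∃ i₀ ∈ s, ∀ i ∈ s, u i ≤ u i₀ :=
  s.exists_mem_forall_le_of_total (β := βᵒᵈ) hs u fun i j => htot j i

end TotalFamily

theorem Finset.sum_sdiff_eq_max_sub_zero {α M : Type*} [DecidableEq α] [AddCommGroup M]
    [LinearOrder M] [IsOrderedAddMonoid M] {s t : Finset α} {w : α → M}
    (hst : s ⊆ t ∨ t ⊆ s) (hw : ∀ a, 0 ≤ w a) :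
    ∑ a ∈ s \ t, w a = max (∑ a ∈ s, w a - ∑ a ∈ t, w a) 0 := by
  rcases hst with h | h
  · rw [sdiff_eq_empty_iff_subset.mpr h, sum_empty, max_eq_right
      (sub_nonpos.mpr (sum_le_sum_of_subset_of_nonneg h fun a _ _ => hw a))]
  · rw [sum_sdiff_eq_sub h, max_eq_left
      (sub_nonneg.mpr (sum_le_sum_of_subset_of_nonneg h fun a _ _ => hw a))]

section Atoms

variable {ι : Type*} [Fintype ι] [DecidableEq ι] (w : Finset ι → ℝ)

/-- The right-hand side of condition (a), `w S` standing for the atom `f_{(S, N∖S)}(x)`. -/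
def atomSum (I J : Finset ι) : ℝ := ∑ S with I ⊆ S ∧ Disjoint J S, w S

noncomputable def atomsContaining (c : ι) : Finset (Finset ι) := {S | w S ≠ 0 ∧ c ∈ S}

variable {w}

@[simp]
theorem mem_atomsContaining {c : ι} {S : Finset ι} :
    S ∈ atomsContaining w c ↔ w S ≠ 0 ∧ c ∈ S := by
  simp [atomsContaining]

theorem atomSum_eq_sum_ne_zero (I J : Finset ι) :
    atomSum w I J = ∑ S with w S ≠ 0 ∧ I ⊆ S ∧ Disjoint J S, w S := by
  rw [atomSum, ← sum_filter_ne_zero, filter_filter]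
  simp only [and_comm (a := w _ ≠ 0)]

theorem atomSum_singleton_empty (c : ι) :
    atomSum w {c} ∅ = ∑ S ∈ atomsContaining w c, w S := by
  simp [atomSum_eq_sum_ne_zero, atomsContaining]

theorem atomSum_pos (hw : ∀ S, 0 ≤ w S) {I J S : Finset ι} (hS : w S ≠ 0) (hIS : I ⊆ S)
    (hJS : Disjoint J S) : 0 < atomSum w I J :=
  (lt_of_le_of_ne (hw S) hS.symm).trans_le <|
    single_le_sum (fun T _ => hw T) (mem_filter.mpr ⟨mem_univ S, hIS, hJS⟩)

theorem isChain_support (hw : ∀ S, 0 ≤ w S)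
    (hsep : ∀ i j, i ≠ j → atomSum w {i} {j} = 0 ∨ atomSum w {j} {i} = 0) :
    IsChain (· ⊆ ·) (Function.support w) := by
  intro S hS T hT _
  by_contra! hST
  obtain ⟨i, hiS, hiT⟩ := not_subset.mp hST.1
  obtain ⟨j, hjT, hjS⟩ := not_subset.mp hST.2
  have hij : i ≠ j := by rintro rfl; exact hiT hjT
  rcases hsep i j hij with h | h
  · exact (atomSum_pos hw hS (singleton_subset_iff.mpr hiS) (disjoint_singleton_left.mpr hjS)).ne' h
  · exact (atomSum_pos hw hT (singleton_subset_iff.mpr hjT) (disjoint_singleton_left.mpr hiT)).ne' h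

theorem atomsContaining_total (hchain : IsChain (· ⊆ ·) (Function.support w)) (i j : ι) :
    atomsContaining w i ⊆ atomsContaining w j ∨ atomsContaining w j ⊆ atomsContaining w i := by
  by_contra! h
  obtain ⟨S, hSi, hSj⟩ := not_subset.mp h.1
  obtain ⟨T, hTj, hTi⟩ := not_subset.mp h.2
  simp only [mem_atomsContaining, not_and] at hSi hSj hTi hTj
  rcases hchain.total hSi.1 hTj.1 with hST | hTS
  · exact hTi hTj.1 (hST hSi.2)
  · exact hSj hSi.1 (hTS hTj.2)

theorem atomSum_singleton_empty_mono (hw : ∀ S, 0 ≤ w S) {i j : ι}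
    (h : atomsContaining w i ⊆ atomsContaining w j) : atomSum w {i} ∅ ≤ atomSum w {j} ∅ := by
  rw [atomSum_singleton_empty, atomSum_singleton_empty]
  exact sum_le_sum_of_subset_of_nonneg h fun S _ _ => hw S

theorem atomSum_eq_max_inf'_sub_sup' (hw : ∀ S, 0 ≤ w S)
    (hchain : IsChain (· ⊆ ·) (Function.support w)) {I J : Finset ι} (hI : I.Nonempty)
    (hJ : J.Nonempty) :
    atomSum w I J =
      max (I.inf' hI (fun i => atomSum w {i} ∅) - J.sup' hJ (fun j => atomSum w {j} ∅)) 0 := by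
  have htot := atomsContaining_total hchain
  obtain ⟨i₀, hi₀, hmin⟩ := I.exists_mem_forall_le_of_total hI (atomsContaining w) htot
  obtain ⟨j₀, hj₀, hmax⟩ := J.exists_mem_forall_ge_of_total hJ (atomsContaining w) htot
  have hinf : I.inf' hI (fun i => atomSum w {i} ∅) = atomSum w {i₀} ∅ :=
    le_antisymm (inf'_le _ hi₀)
      (le_inf' _ _ fun i hi => atomSum_singleton_empty_mono hw (hmin i hi))
  have hsup : J.sup' hJ (fun j => atomSum w {j} ∅) = atomSum w {j₀} ∅ :=
    le_antisymm (sup'_le _ _ fun j hj => atomSum_singleton_empty_mono hw (hmax j hj))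
      (le_sup' (fun j => atomSum w {j} ∅) hj₀)
  have hsplit : atomSum w I J = ∑ S ∈ atomsContaining w i₀ \ atomsContaining w j₀, w S := by
    rw [atomSum_eq_sum_ne_zero]
    refine sum_congr (ext fun S => ?_) fun _ _ => rfl
    have hI_iff : w S ≠ 0 → (I ⊆ S ↔ i₀ ∈ S) := fun hS =>
      ⟨fun h => h hi₀, fun h i hi => (mem_atomsContaining.mp (hmin i hi
        (mem_atomsContaining.mpr ⟨hS, h⟩))).2⟩
    have hJ_iff : w S ≠ 0 → (Disjoint J S ↔ j₀ ∉ S) := fun hS =>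
      ⟨fun h => disjoint_left.mp h hj₀, fun h => disjoint_left.mpr fun j hj hjS =>
        h (mem_atomsContaining.mp (hmax j hj (mem_atomsContaining.mpr ⟨hS, hjS⟩))).2⟩
    simp only [mem_sdiff, mem_atomsContaining, mem_filter, mem_univ, true_and]
    by_cases hS : w S = 0
    · simp [hS]
    · simp [hS, hI_iff hS, hJ_iff hS]
  rw [hsplit, sum_sdiff_eq_max_sub_zero (htot i₀ j₀) hw, hinf, hsup, atomSum_singleton_empty,
    atomSum_singleton_empty]

end Atoms

theorem s2m_normalized_density_general {X : Type*}
    {ι : Type*} [Fintype ι] [DecidableEq ι]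
    (f : Finset ι → Finset ι → X → ℝ)
    (hf_nonneg : ∀ I J x, 0 ≤ f I J x)
    (ha : ∀ I J : Finset ι, I.Nonempty → Disjoint I J → ∀ x,
        f I J x = ∑ S ∈ univ.powerset.filter (fun S => I ⊆ S ∧ J ⊆ Sᶜ), f S Sᶜ x)
    (hb : ∀ i j : ι, i ≠ j →
        Function.support (f {i} {j}) ∩ Function.support (f {j} {i}) = ∅)
    (I J : Finset ι) (hI : I.Nonempty) (hJ : J.Nonempty) (hd : Disjoint I J)
    (π : ι → ℝ)
    (g : ι → X → ℝ)
    (hfg : ∀ c x, f {c} ∅ x = π c * g c x)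
    (πIJ : ℝ)
    (p : X → ℝ) (hp : ∀ x, p x = f I J x / πIJ) :
    ∀ x : X, p x =
      πIJ⁻¹ * max (I.inf' hI (fun i => π i * g i x) - J.sup' hJ (fun j => π j * g j x)) 0 := by
  intro x
  set w : Finset ι → ℝ := fun S => f S Sᶜ x
  have hw : ∀ S, 0 ≤ w S := fun S => hf_nonneg _ _ x
  have hfw : ∀ I J, I.Nonempty → Disjoint I J → f I J x = atomSum w I J := fun I J hI hIJ => by
    simp only [ha I J hI hIJ x, powerset_univ, subset_compl_iff_disjoint_right, atomSum, w]
  have hsep : ∀ i j, i ≠ j → atomSum w {i} {j} = 0 ∨ atomSum w {j} {i} = 0 := fun i j hij => by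
    have hx : x ∉ Function.support (f {i} {j}) ∩ Function.support (f {j} {i}) := by
      simp [hb i j hij]
    rw [← hfw _ _ (singleton_nonempty i) (disjoint_singleton.mpr hij),
      ← hfw _ _ (singleton_nonempty j) (disjoint_singleton.mpr hij.symm)]
    simpa [Function.mem_support, imp_iff_not_or] using hx
  have hmarg : ∀ c, π c * g c x = atomSum w {c} ∅ := fun c => by
    rw [← hfg, hfw _ _ (singleton_nonempty c) (disjoint_empty_right _)]
  rw [hp, div_eq_inv_mul, hfw I J hI hd,
    atomSum_eq_max_inf'_sub_sup' hw (isChain_support hw hsep) hI hJ]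
  simp only [hmarg]

/-- Equation (4) of the paper: under conditions (a) and (b), with `f_c = π_c · g_c` and
`π_{(I,J)} = ∫ f_{(I,J)} dμ > 0`, the normalized joint-class density satisfies
`p_{(I,J)}(x) = π_{(I,J)}⁻¹ (min_{i∈I} π_i g_i(x) − max_{j∈J} π_j g_j(x))⁺`. -/
theorem s2m_normalized_density {X : Type*} [MeasurableSpace X]
    {ι : Type*} [Fintype ι] [DecidableEq ι]
    (μ : Measure X)
    (f : Finset ι → Finset ι → X → ℝ)
    (hf_nonneg : ∀ I J x, 0 ≤ f I J x)
    (hf_meas : ∀ I J, Measurable (f I J))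
    (ha : ∀ I J : Finset ι, I.Nonempty → Disjoint I J → ∀ x,
        f I J x = ∑ S ∈ univ.powerset.filter (fun S => I ⊆ S ∧ J ⊆ Sᶜ), f S Sᶜ x)
    (hb : ∀ i j : ι, i ≠ j →
        Function.support (f {i} {j}) ∩ Function.support (f {j} {i}) = ∅)
    (I J : Finset ι) (hI : I.Nonempty) (hJ : J.Nonempty) (hd : Disjoint I J)
    (π : ι → ℝ) (hπ : ∀ c, 0 < π c)
    (g : ι → X → ℝ) (hg_nonneg : ∀ c x, 0 ≤ g c x) (hg_meas : ∀ c, Measurable (g c))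
    (hfg : ∀ c x, f {c} ∅ x = π c * g c x)
    (πIJ : ℝ) (hπIJ : πIJ = ∫ x, f I J x ∂μ) (hpos : 0 < πIJ)
    (p : X → ℝ) (hp : ∀ x, p x = f I J x / πIJ) :
    ∀ x : X, p x =
      πIJ⁻¹ * max (I.inf' hI (fun i => π i * g i x) - J.sup' hJ (fun j => π j * g j x)) 0 :=
  s2m_normalized_density_general f hf_nonneg ha hb I J hI hJ hd π g hfg πIJ p hp
end

section
/- Let (I,J) ∈ 𝓘, let p_data, p_G : X → (0,∞) be positive functions, let π_c > 0 and q_c > 0 for each c ∈ N, and let g_c : X → [0,∞) be functions. Define the optimal classifiers D_v(x) := p_data(x)/(p_data(x) + p_G(x)) and D_r(c|x) := g_c(x) · q_c / p_data(x), and define r_{(I,J)}(x) := (min_{i∈I} (π_i/q_i) D_r(i|x) − max over ({(π_j/q_j) D_r(j|x) : j ∈ J} ∪ {0}))⁺. Let π_{(I,J)} > 0 and define p_{(I,J)}(x) := π_{(I,J)}^{−1} · (min_{i∈I} π_i g_i(x) − max over ({π_j g_j(x) : j ∈ J} ∪ {0}))⁺. Then for all x, x' ∈ X with r_{(I,J)}(x)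 > 0, the acceptance-ratio identity holds: (p_{(I,J)}(x')/p_G(x')) / (p_{(I,J)}(x)/p_G(x)) = (r_{(I,J)}(x') · (D_v(x)^{−1} − 1)) / (r_{(I,J)}(x) · (D_v(x')^{−1} − 1)). -/
/-!
Since `(π_c / q_c) D_r(c|x) = π_c g_c(x) / p_data(x)` and scaling by a nonnegative constant
commutes with `min`, `max` and `(·)⁺`, one has `r_{(I,J)}(x) = π_{(I,J)} p_{(I,J)}(x) / p_data(x)`.
Together with `D_v(x)⁻¹ - 1 = p_G(x) / p_data(x)`, both sides become the same quotient once the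
factors `π_{(I,J)}`, `p_data(x)` and `p_data(x')` cancel.
-/

open Finset

section Field

variable {K : Type*} [Field K]

theorem inv_div_add_sub_one {a b : K} (ha : a ≠ 0) : (a / (a + b))⁻¹ - 1 = b / a := by
  rw [inv_div, add_div, div_self ha, add_sub_cancel_left]

theorem mul_div_div_mul_div_eq {c m m' d d' s s' : K} (hc : c ≠ 0) (hd : d ≠ 0) (hd' : d' ≠ 0) :
    (c * m' / s') / (c * m / s) = (m' / d' * (s / d)) / (m / d * (s' / d')) :=
  calc (c * m' / s') / (c * m / s) = c * (m' * s) / (c * (s' * m)) := by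
        rw [div_div_div_eq]; ring
    _ = (d * d') * (m' * s) / ((d * d') * (s' * m)) := by
        rw [mul_div_mul_left _ _ hc, mul_div_mul_left _ _ (mul_ne_zero hd hd')]
    _ = (m' / d' * (s / d)) / (m / d * (s' / d')) := by
        rw [div_mul_div_comm, div_mul_div_comm, div_div_div_eq]; ring

end Field

section JointExcess

variable {ι K : Type*} [Field K] [LinearOrder K] [IsStrictOrderedRing K]

def jointExcess (I J : Finset ι) (hI : I.Nonempty) (F : ι → K) : K :=
  max (I.inf' hI F - (insert 0 (J.image F)).max' (insert_nonempty _ _)) 0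

theorem jointExcess_const_mul (I J : Finset ι) (hI : I.Nonempty) (F : ι → K) {c : K}
    (hc : 0 ≤ c) : jointExcess I J hI (fun i => c * F i) = c * jointExcess I J hI F := by
  have hmono : Monotone (c * ·) := fun _ _ h => mul_le_mul_of_nonneg_left h hc
  have hinf : I.inf' hI (fun i => c * F i) = c * I.inf' hI F :=
    (apply_inf'_eq_inf'_comp hI _ fun _ _ => hmono.map_min).symm
  have hmax : (insert 0 (J.image fun j => c * F j)).max' (insert_nonempty _ _)
      = c * (insert 0 (J.image F)).max' (insert_nonempty _ _) := by
    rw [hmono.map_finset_max' (insert_nonempty _ _)]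
    simp only [image_insert, image_image, mul_zero, Function.comp_def]
  rw [jointExcess, jointExcess, hinf, hmax, ← mul_sub, mul_max_of_nonneg _ _ hc, mul_zero]

end JointExcess

theorem s2m_acceptance_ratio_unconditional_general {X : Type*} {ι : Type*}
    (I J : Finset ι) (hI : I.Nonempty)
    (pdata pG : X → ℝ) (hpdata : ∀ x, 0 < pdata x)
    (π q : ι → ℝ) (hq : ∀ c, 0 < q c)
    (g : ι → X → ℝ)
    (Dv : X → ℝ) (hDv : ∀ x, Dv x = pdata x / (pdata x + pG x))
    (Dr : ι → X → ℝ) (hDr : ∀ c x, Dr c x = g c x * q c / pdata x)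
    (r : X → ℝ)
    (hr : ∀ x, r x = max (I.inf' hI (fun i => (π i / q i) * Dr i x) -
        (insert (0 : ℝ) (J.image fun j => (π j / q j) * Dr j x)).max'
          (insert_nonempty _ _)) 0)
    (πIJ : ℝ) (hπIJ : 0 < πIJ)
    (p : X → ℝ)
    (hp : ∀ x, p x = πIJ⁻¹ * max (I.inf' hI (fun i => π i * g i x) -
        (insert (0 : ℝ) (J.image fun j => π j * g j x)).max' (insert_nonempty _ _)) 0) :
    ∀ x x' : X, 0 < r x →
      (p x' / pG x') / (p x / pG x)
        = (r x' * ((Dv x)⁻¹ - 1)) / (r x * ((Dv x')⁻¹ - 1)) := by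
  intro x x' _
  have hr_div : ∀ y, r y = jointExcess I J hI (fun c => π c * g c y) / pdata y := fun y => by
    have hterm : (fun c => (π c / q c) * Dr c y) = fun c => (pdata y)⁻¹ * (π c * g c y) := by
      ext c
      rw [hDr]
      field_simp [(hq c).ne', (hpdata y).ne']
    rw [hr, ← jointExcess, hterm, jointExcess_const_mul _ _ _ _ (inv_nonneg.2 (hpdata y).le),
      inv_mul_eq_div]
  have hDv_inv_sub_one : ∀ y, (Dv y)⁻¹ - 1 = pG y / pdata y := fun y =>
    hDv y ▸ inv_div_add_sub_one (hpdata y).ne'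
  rw [hp, hp, hr_div, hr_div, hDv_inv_sub_one, hDv_inv_sub_one]
  exact mul_div_div_mul_div_eq (inv_ne_zero hπIJ.ne') (hpdata x).ne' (hpdata x').ne'

/-- Equation (6) of the paper (acceptance ratio for unconditional GANs): with optimal
classifiers `D_v(x) = p_data(x)/(p_data(x)+p_G(x))`, `D_r(c|x) = g_c(x) q_c / p_data(x)`,
`r_{(I,J)}(x) = (min_{i∈I} (π_i/q_i) D_r(i|x) − max({(π_j/q_j) D_r(j|x) : j∈J} ∪ {0}))⁺`,
and `p_{(I,J)}(x) = π_{(I,J)}⁻¹ (min_{i∈I} π_i g_i(x) − max({π_j g_j(x) : j∈J} ∪ {0}))⁺`,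
one has `(p_{(I,J)}(x')/p_G(x')) / (p_{(I,J)}(x)/p_G(x))
  = r_{(I,J)}(x') (D_v(x)⁻¹ − 1) / (r_{(I,J)}(x) (D_v(x')⁻¹ − 1))`. -/
theorem s2m_acceptance_ratio_unconditional {X : Type*} {ι : Type*} [Fintype ι] [DecidableEq ι]
    (I J : Finset ι) (hI : I.Nonempty) (hd : Disjoint I J)
    (pdata pG : X → ℝ) (hpdata : ∀ x, 0 < pdata x) (hpG : ∀ x, 0 < pG x)
    (π q : ι → ℝ) (hπ : ∀ c, 0 < π c) (hq : ∀ c, 0 < q c)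
    (g : ι → X → ℝ) (hg : ∀ c x, 0 ≤ g c x)
    (Dv : X → ℝ) (hDv : ∀ x, Dv x = pdata x / (pdata x + pG x))
    (Dr : ι → X → ℝ) (hDr : ∀ c x, Dr c x = g c x * q c / pdata x)
    (r : X → ℝ)
    (hr : ∀ x, r x = max (I.inf' hI (fun i => (π i / q i) * Dr i x) -
        (insert (0 : ℝ) (J.image fun j => (π j / q j) * Dr j x)).max'
          (insert_nonempty _ _)) 0)
    (πIJ : ℝ) (hπIJ : 0 < πIJ)
    (p : X → ℝ)
    (hp : ∀ x, p x = πIJ⁻¹ * max (I.inf' hI (fun i => π i * g i x) -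
        (insert (0 : ℝ) (J.image fun j => π j * g j x)).max' (insert_nonempty _ _)) 0) :
    ∀ x x' : X, 0 < r x →
      (p x' / pG x') / (p x / pG x)
        = (r x' * ((Dv x)⁻¹ - 1)) / (r x * ((Dv x')⁻¹ - 1)) :=
  s2m_acceptance_ratio_unconditional_general I J hI pdata pG hpdata π q hq g Dv hDv Dr hDr r hr πIJ
    hπIJ p hp
end
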